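/- For all holomorphic tangent vector fields Z, W on M one has g([Z, W̄], T) = −2 i h(Z, W̄), where [Z,W̄] is the Lie bracket (computed via smooth extensions) and h is the complex-bilinear extension of the second fundamental form. In other words, the Levi form L_η(Z,W̄) = (1/2i) dη(Z,W̄) associated with the 1-form η(·) = g(·, T) coincides with h(Z,W̄). -/

import Mathlib

noncomputable section
open scoped BigOperators

/-- `ℂ^{n+1}`, identified with `ℝ^{2n+2}` via its real structure. -/
abbrev E (n : ℕ) : Type := EuclideanSpace ℂ (Fin (n + 1))

/-- The standard complex structure: multiplication by `i`. -/
def J {n : ℕ} (v : E n) : E n := Complex.I • v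

/-- The real inner product `⟨x, y⟩ = Re ⟪x, y⟫`. -/
def rI {n : ℕ} (x y : E n) : ℝ := (inner ℂ x y : ℂ).re

/-- The (real) tangent space at `p` of a hypersurface with unit normal `ν`. -/
def tangAt {n : ℕ} (ν : E n → E n) (p : E n) : Set (E n) := {X | rI (ν p) X = 0}

/-- `M` is a smooth embedded real hypersurface of `ℂ^{n+1}` (locally a regular zero
set of a smooth real function), oriented by the smooth unit normal field `ν`
(extended smoothly to the ambient space). -/
def IsHypersurface {n : ℕ} (M : Set (E n)) (ν : E n → E n) : Prop :=
  ContDiff ℝ (⊤ : ℕ∞) ν ∧ (∀ p ∈ M, ‖ν p‖ = 1) ∧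
    ∀ p ∈ M, ∃ (V : Set (E n)) (F : E n → ℝ), IsOpen V ∧ p ∈ V ∧
      ContDiffOn ℝ (⊤ : ℕ∞) F V ∧ (M ∩ V = {z ∈ V | F z = 0}) ∧
      ∀ z ∈ M ∩ V, ∀ X : E n, (fderiv ℝ F z X = 0 ↔ X ∈ tangAt ν z)

/-- The horizontal (maximal complex) subspace `H_p = {X ∈ T_pM : JX ∈ T_pM}`. -/
def horizAt {n : ℕ} (ν : E n → E n) (p : E n) : Set (E n) :=
  {X | X ∈ tangAt ν p ∧ J X ∈ tangAt ν p}

/-- The second fundamental form `h(X,Y) = ⟨X, ∂_Y ν⟩`. -/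
def sff {n : ℕ} (ν : E n → E n) (p : E n) (X Y : E n) : ℝ :=
  rI X (fderiv ℝ ν p Y)

/-- The family `X_1, …, X_n, J X_1, …, J X_n`. -/
def combined {n : ℕ} (X : Fin n → E n) : (Fin n ⊕ Fin n) → E n :=
  Sum.elim X (fun α => J (X α))

/-- `{X_1, …, X_n, J X_1, …, J X_n}` is an orthonormal basis of the horizontal
space at `p` (w.r.t. the real inner product). -/
def IsHorizONB {n : ℕ} (ν : E n → E n) (p : E n) (X : Fin n → E n) : Prop :=
  (∀ α, X α ∈ horizAt ν p) ∧
  (∀ i j, rI (combined X i) (combined X j) = if i = j then 1 else 0) ∧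
  (∀ Y ∈ horizAt ν p, Y ∈ Submodule.span ℝ (Set.range (combined X)))

/-! ## Complexified tangent vectors
A complexified vector `X + iY` (the complexification unit `i` is distinct from
the complex structure `J`) is modelled as the pair `(X, Y)`. -/

/-- Complexified vectors of `ℂ^{n+1}`: `(X, Y)` stands for `X + iY`. -/
abbrev CV (n : ℕ) : Type := E n × E n

/-- Conjugation `X + iY ↦ X - iY`. -/
def conjCV {n : ℕ} (v : CV n) : CV n := (v.1, -v.2)

/-- Multiplication of a complexified vector by a complex scalar. -/
def csmul {n : ℕ} (c : ℂ) (v : CV n) : CV n :=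
  (c.re • v.1 - c.im • v.2, c.re • v.2 + c.im • v.1)

/-- `g`, the complex-bilinear extension of the real inner product. -/
def gC {n : ℕ} (v w : CV n) : ℂ :=
  ((rI v.1 w.1 - rI v.2 w.2 : ℝ) : ℂ) + ((rI v.1 w.2 + rI v.2 w.1 : ℝ) : ℂ) * Complex.I

/-- The flat connection `D` of `ℂ^{n+1}` (componentwise directional derivative),
complex-bilinearly extended: `DD V u p = D_u V (p)`. -/
def DD {n : ℕ} (V : E n → CV n) (u : CV n) (p : E n) : CV n :=
  (fderiv ℝ (fun z => (V z).1) p u.1 - fderiv ℝ (fun z => (V z).2) p u.2,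
   fderiv ℝ (fun z => (V z).1) p u.2 + fderiv ℝ (fun z => (V z).2) p u.1)

/-- The Lie bracket `[U,V]` of complexified fields (for the flat ambient space
it is `D_U V - D_V U`). -/
def bracket {n : ℕ} (U V : E n → CV n) (p : E n) : CV n :=
  DD V (U p) p - DD U (V p) p

/-- Derivative `U f` of a complex function along a complexified vector. -/
def dC {n : ℕ} (f : E n → ℂ) (u : CV n) (p : E n) : ℂ :=
  (fderiv ℝ f p u.1) + Complex.I * (fderiv ℝ f p u.2)

/-- The field `T = J(ν)`, viewed as a complexified field. -/
def TF {n : ℕ} (ν : E n → E n) (z : E n) : CV n := (J (ν z), 0)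

/-- The holomorphic unit normal `N = (ν - iT)/√2`. -/
def NF {n : ℕ} (ν : E n → E n) (z : E n) : CV n :=
  ((Real.sqrt 2)⁻¹ • ν z, -((Real.sqrt 2)⁻¹ • J (ν z)))

/-- The complex-bilinear extension of the second fundamental form:
`h(Z, W) = g(Z, D_W ν)`. -/
def hC {n : ℕ} (ν : E n → E n) (p : E n) (v w : CV n) : ℂ :=
  gC v (fderiv ℝ ν p w.1, fderiv ℝ ν p w.2)

/-- Conjugate of a complexified field. -/
def conjF {n : ℕ} (V : E n → CV n) : E n → CV n := fun z => conjCV (V z)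

/-- A holomorphic tangent field `Z = X - iJX`, with `X` a smooth real field
satisfying `⟪X, ν⟫ = 0` (hermitian orthogonality) at every point of `M`. -/
def IsHoloField {n : ℕ} (M : Set (E n)) (ν : E n → E n) (Z : E n → CV n) : Prop :=
  ContDiff ℝ (⊤ : ℕ∞) (fun z => (Z z).1) ∧
  (∀ z, (Z z).2 = -J ((Z z).1)) ∧
  ∀ p ∈ M, (inner ℂ (ν p) ((Z p).1) : ℂ) = 0

/-- A complexified tangent field: a smooth field whose value at every point of
`M` lies in the complexified tangent space `ℂ T_p M`. -/
def IsCTField {n : ℕ} (M : Set (E n)) (ν : E n → E n) (V : E n → CV n) : Prop :=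
  ContDiff ℝ (⊤ : ℕ∞) (fun z => (V z).1) ∧ ContDiff ℝ (⊤ : ℕ∞) (fun z => (V z).2) ∧
  ∀ p ∈ M, rI (ν p) ((V p).1) = 0 ∧ rI (ν p) ((V p).2) = 0

/-- Projection of a real vector onto the real horizontal space (orthogonal
complement of `ν` and `T = Jν`). -/
def horR {n : ℕ} (ν : E n → E n) (z : E n) (x : E n) : E n :=
  x - rI (ν z) x • ν z - rI (J (ν z)) x • J (ν z)

/-- Projection `Π_H` of a complexified tangent vector onto the holomorphic bundle. -/
def PiH {n : ℕ} (ν : E n → E n) (z : E n) (v : CV n) : CV n :=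
  ((2 : ℝ)⁻¹ • (horR ν z v.1 + J (horR ν z v.2)),
   (2 : ℝ)⁻¹ • (horR ν z v.2 - J (horR ν z v.1)))

/-- Projection `Π_H̄` onto the antiholomorphic bundle. -/
def PiHb {n : ℕ} (ν : E n → E n) (z : E n) (v : CV n) : CV n :=
  ((2 : ℝ)⁻¹ • (horR ν z v.1 - J (horR ν z v.2)),
   (2 : ℝ)⁻¹ • (horR ν z v.2 + J (horR ν z v.1)))

/-- The connection `∇`: writing `V = Z + W̄ + fT` with `Z = Π_H V` holomorphic,
`W̄ = Π_H̄ V` antiholomorphic and `f = g(V, T)`, one sets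
`∇_u V = D_u Z - g(D_u Z, N̄) N + D_u W̄ - g(D_u W̄, N) N̄ + (u f) T`. -/
def nabla {n : ℕ} (ν : E n → E n) (V : E n → CV n) (u : CV n) (p : E n) : CV n :=
  (DD (fun z => PiH ν z (V z)) u p
      - csmul (gC (DD (fun z => PiH ν z (V z)) u p) (conjCV (NF ν p))) (NF ν p))
  + (DD (fun z => PiHb ν z (V z)) u p
      - csmul (gC (DD (fun z => PiHb ν z (V z)) u p) (NF ν p)) (conjCV (NF ν p)))
  + csmul (dC (fun z => gC (V z) (TF ν z)) u p) (TF ν p)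

/-- The torsion `Tor_∇(U,V) = ∇_U V - ∇_V U - [U,V]`. -/
def Tor {n : ℕ} (ν : E n → E n) (U V : E n → CV n) (p : E n) : CV n :=
  nabla ν V (U p) p - nabla ν U (V p) p - bracket U V p

/-- The covariant derivative of the second fundamental form:
`∇_Z h (U, W) = Z h(U,W) - h(∇_Z U, W) - h(U, ∇_Z W)`. -/
def nablaHform {n : ℕ} (ν : E n → E n) (Zf U W : E n → CV n) (p : E n) : ℂ :=
  dC (fun z => hC ν z (U z) (W z)) (Zf p) p
    - hC ν p (nabla ν U (Zf p) p) (W p) - hC ν p (U p) (nabla ν W (Zf p) p)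

/-! Write `Z = X - iJX` and `W̄ = Y + iJY`. The function `g(W̄, T)` vanishes on `M` and `Z` is
tangent to `M`, so differentiating along `Z` gives
`g(D_Z W̄, T) = -g(W̄, D_Z T) = -g(W̄, J D_Z ν) = -i h(W̄, Z)`, because `J W̄ = -i W̄`.
Likewise `g(D_W̄ Z, T) = i h(Z, W̄)`, because `J Z = i Z`. Subtracting, the claim follows from the
symmetry of `h` on tangent vectors.

Tangential derivatives of functions vanishing on `M` vanish, since every tangent vector is the
velocity of a curve in `M` (implicit function theorem). Symmetry of `h`: if `M = {F = 0}` locally,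
then `dF = dF(ν) ⟨ν, ·⟩` along `M`; differentiating along `M` shows that the Hessian of `F` equals
`dF(ν) h` on tangent vectors, and Hessians are symmetric. -/

open Filter Topology

theorem HasStrictFDerivAt.exists_curve_of_mem_ker {𝕜 : Type*} [NontriviallyNormedField 𝕜]
    [CompleteSpace 𝕜] {G H : Type*} [NormedAddCommGroup G] [NormedSpace 𝕜 G] [CompleteSpace G]
    [NormedAddCommGroup H] [NormedSpace 𝕜 H] [FiniteDimensional 𝕜 H]
    {f : G → H} {f' : G →L[𝕜] H} {a : G}
    (hf : HasStrictFDerivAt f f' a) (hf' : f'.range = ⊤) {v : G} (hv : f' v = 0) :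
    ∃ γ : 𝕜 → G, γ 0 = a ∧ HasDerivAt γ v 0 ∧ ∀ᶠ t in 𝓝 0, f (γ t) = f a := by
  let k : f'.ker := ⟨v, hv⟩
  refine ⟨fun t => hf.implicitFunction f f' hf' (f a) (t • k), by simp, ?_, ?_⟩
  · have h := (hf.to_implicitFunction hf').hasFDerivAt.comp_hasDerivAt_of_eq (0 : 𝕜)
      ((hasDerivAt_id (0 : 𝕜)).smul_const k) (by simp)
    rw [one_smul] at h
    exact h
  · have hlim : Tendsto (fun t : 𝕜 => (f a, t • k)) (𝓝 0) (𝓝 (f a, 0)) :=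
      tendsto_const_nhds.prodMk_nhds
        ((continuous_id.smul continuous_const).tendsto' (0 : 𝕜) 0 (zero_smul 𝕜 k))
    exact hlim.eventually (hf.map_implicitFunction_eq hf')

section RealInner

variable {n : ℕ}

lemma rI_eq_inner (x y : E n) : rI x y = inner ℝ x y := by
  simp [rI, PiLp.inner_apply, RCLike.inner_apply, Complex.re_sum]

lemma rI_neg_left (x y : E n) : rI (-x) y = -rI x y := by
  simp [rI]

lemma rI_J_J (x y : E n) : rI (J x) (J y) = rI x y := by
  simp [rI, J]

lemma rI_J_right (x y : E n) : rI x (J y) = -rI (J x) y := by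
  simp [rI, J]

lemma rI_self_of_norm_eq_one {x : E n} (h : ‖x‖ = 1) : rI x x = 1 := by
  simp [rI, h]

lemma apply_eq_apply_mul_rI {L : E n →L[ℝ] ℝ} {N : E n} (hN : ‖N‖ = 1)
    (hker : ∀ X, rI N X = 0 → L X = 0) (w : E n) : L w = L N * rI N w := by
  have h := hker (w - rI N w • N) (by
    rw [rI_eq_inner, inner_sub_right, real_inner_smul_right, ← rI_eq_inner,
      ← rI_eq_inner, rI_self_of_norm_eq_one hN, mul_one, sub_self])
  rw [map_sub, map_smul, smul_eq_mul] at h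
  linarith

lemma apply_ne_zero_of_ker_le_tangAt {ν : E n → E n} {L : E n →L[ℝ] ℝ} {p : E n}
    (hν : ‖ν p‖ = 1) (hker : ∀ X, L X = 0 → X ∈ tangAt ν p) : L (ν p) ≠ 0 := fun h => by
  simpa [tangAt, rI_self_of_norm_eq_one hν] using hker _ h

end RealInner

section Hypersurface

variable {n : ℕ} {M : Set (E n)} {ν : E n → E n}

theorem IsHypersurface.exists_curve (hM : IsHypersurface M ν) {p : E n} (hp : p ∈ M)
    {v : E n} (hv : v ∈ tangAt ν p) :
    ∃ γ : ℝ → E n, γ 0 = p ∧ HasDerivAt γ v 0 ∧ ∀ᶠ t in 𝓝 0, γ t ∈ M := by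
  obtain ⟨V, F, hVo, hpV, hF, hMV, htan⟩ := hM.2.2 p hp
  have hFp : HasStrictFDerivAt F (fderiv ℝ F p) p :=
    (hF.contDiffAt (hVo.mem_nhds hpV)).hasStrictFDerivAt (by simp)
  have hν := apply_ne_zero_of_ker_le_tangAt (hM.2.1 p hp) fun X => (htan p ⟨hp, hpV⟩ X).1
  have hrange : (fderiv ℝ F p).range = ⊤ :=
    LinearMap.range_eq_top.2 fun x => ⟨(x / fderiv ℝ F p (ν p)) • ν p, by simp [hν]⟩
  obtain ⟨γ, hγ0, hγ, hγF⟩ :=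
    hFp.exists_curve_of_mem_ker hrange ((htan p ⟨hp, hpV⟩ v).2 hv)
  have hFp0 : F p = 0 := ((Set.ext_iff.1 hMV p).1 ⟨hp, hpV⟩).2
  have hγV : ∀ᶠ t in 𝓝 0, γ t ∈ V :=
    hγ.continuousAt.eventually (hγ0 ▸ hVo.mem_nhds hpV)
  refine ⟨γ, hγ0, hγ, ?_⟩
  filter_upwards [hγF, hγV] with t hFt hVt
  exact ((Set.ext_iff.1 hMV (γ t)).2 ⟨hVt, hFt.trans hFp0⟩).1

theorem IsHypersurface.fderiv_apply_eq_zero {G : Type*} [NormedAddCommGroup G] [NormedSpace ℝ G]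
    (hM : IsHypersurface M ν) {p : E n} (hp : p ∈ M) {f : E n → G}
    (hf : DifferentiableAt ℝ f p) (hf0 : ∀ᶠ z in 𝓝 p, z ∈ M → f z = 0)
    {v : E n} (hv : v ∈ tangAt ν p) : fderiv ℝ f p v = 0 := by
  obtain ⟨γ, hγ0, hγ, hγM⟩ := hM.exists_curve hp hv
  have hfγ : HasDerivAt (f ∘ γ) (fderiv ℝ f p v) 0 :=
    hf.hasFDerivAt.comp_hasDerivAt_of_eq 0 hγ hγ0.symm
  have hzero : f ∘ γ =ᶠ[𝓝 0] fun _ => 0 := by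
    filter_upwards [hγM, hγ.continuousAt.eventually (hγ0 ▸ hf0)] with t hγt hft using hft hγt
  exact hfγ.unique ((hasDerivAt_const 0 (0 : G)).congr_of_eventuallyEq hzero)

theorem IsHypersurface.fderiv_fderiv_apply_eq_mul_sff (hM : IsHypersurface M ν) {p : E n}
    (hp : p ∈ M) {F : E n → ℝ} {V : Set (E n)} (hV : V ∈ 𝓝 p) (hF : ContDiffAt ℝ 2 F p)
    (htan : ∀ z ∈ M ∩ V, ∀ X ∈ tangAt ν z, fderiv ℝ F z X = 0)
    {s t : E n} (hs : s ∈ tangAt ν p) (ht : t ∈ tangAt ν p) :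
    fderiv ℝ (fderiv ℝ F) p s t = fderiv ℝ F p (ν p) * sff ν p t s := by
  have hF' : DifferentiableAt ℝ (fderiv ℝ F) p :=
    (hF.fderiv_right (m := 1) (by norm_num)).differentiableAt one_ne_zero
  have hν : HasFDerivAt ν (fderiv ℝ ν p) p := (hM.1.differentiable (by simp) p).hasFDerivAt
  -- `F'_z t - F'_z (ν z) ⟨ν z, t⟩` vanishes on `M`; differentiate it along `s`.
  have hΦ := (hF'.hasFDerivAt.clm_apply (hasFDerivAt_const t p)).sub
    ((hF'.hasFDerivAt.clm_apply hν).mul (hν.inner ℝ (hasFDerivAt_const t p)))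
  have h0 := hM.fderiv_apply_eq_zero hp hΦ.differentiableAt ?_ hs
  · rw [hΦ.fderiv] at h0
    have ht' : inner ℝ (ν p) t = 0 := (rI_eq_inner _ _).symm.trans ht
    simp only [ContinuousLinearMap.comp_zero, zero_add, ht', smul_add, zero_smul, add_zero,
      sub_apply, ContinuousLinearMap.flip_apply, smul_apply, ContinuousLinearMap.comp_apply,
      ContinuousLinearMap.prod_apply, zero_apply, fderivInnerCLM_apply, inner_zero_right,
      smul_eq_mul] at h0
    rw [sff, rI_eq_inner, real_inner_comm]
    linarith
  · filter_upwards [hV] with z hzV hzM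
    show fderiv ℝ F z t - fderiv ℝ F z (ν z) * inner ℝ (ν z) t = 0
    rw [apply_eq_apply_mul_rI (hM.2.1 z hzM) (fun X hX => htan z ⟨hzM, hzV⟩ X hX) t,
      rI_eq_inner, sub_self]

theorem IsHypersurface.sff_comm (hM : IsHypersurface M ν) {p : E n} (hp : p ∈ M)
    {u v : E n} (hu : u ∈ tangAt ν p) (hv : v ∈ tangAt ν p) : sff ν p u v = sff ν p v u := by
  obtain ⟨V, F, hVo, hpV, hF, -, htan⟩ := hM.2.2 p hp
  have hF2 : ContDiffAt ℝ 2 F p :=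
    (hF.contDiffAt (hVo.mem_nhds hpV)).of_le (WithTop.coe_le_coe.2 le_top)
  have hc := apply_ne_zero_of_ker_le_tangAt (hM.2.1 p hp) fun X => (htan p ⟨hp, hpV⟩ X).1
  have htan' : ∀ z ∈ M ∩ V, ∀ X ∈ tangAt ν z, fderiv ℝ F z X = 0 :=
    fun z hz X hX => (htan z hz X).2 hX
  have hsymm := hF2.isSymmSndFDerivAt (by simp) u v
  rw [hM.fderiv_fderiv_apply_eq_mul_sff hp (hVo.mem_nhds hpV) hF2 htan' hu hv,
    hM.fderiv_fderiv_apply_eq_mul_sff hp (hVo.mem_nhds hpV) hF2 htan' hv hu] at hsymm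
  exact (mul_left_cancel₀ hc hsymm).symm

end Hypersurface

section Complexified

variable {n : ℕ} {ν : E n → E n}

def ctangAt (ν : E n → E n) (p : E n) : Set (CV n) :=
  {v | v.1 ∈ tangAt ν p ∧ v.2 ∈ tangAt ν p}

lemma gC_eq (v w : CV n) :
    gC v w = (rI v.1 w.1 : ℂ) - rI v.2 w.2 + (rI v.1 w.2 + rI v.2 w.1) * Complex.I := by
  simp [gC]

lemma gC_sub_left (v v' w : CV n) : gC (v - v') w = gC v w - gC v' w := by
  simp only [gC_eq, Prod.fst_sub, Prod.snd_sub, rI_eq_inner, inner_sub_left, Complex.ofReal_sub]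
  ring

lemma gC_J_right_of_snd_eq_neg_J {v : CV n} (hv : v.2 = -J v.1) (x y : E n) :
    gC v (J x, J y) = -Complex.I * gC v (x, y) := by
  rw [gC_eq, gC_eq, hv]
  simp only [rI_neg_left, rI_J_J]
  simp only [rI_J_right, Complex.ofReal_neg]
  ring_nf
  rw [Complex.I_sq]
  ring

lemma gC_J_right_of_snd_eq_J {v : CV n} (hv : v.2 = J v.1) (x y : E n) :
    gC v (J x, J y) = Complex.I * gC v (x, y) := by
  rw [gC_eq, gC_eq, hv]
  simp only [rI_J_J]
  simp only [rI_J_right, Complex.ofReal_neg]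
  ring_nf
  rw [Complex.I_sq]
  ring

lemma hC_eq_sff (p : E n) (v w : CV n) :
    hC ν p v w = (sff ν p v.1 w.1 : ℂ) - sff ν p v.2 w.2
      + (sff ν p v.1 w.2 + sff ν p v.2 w.1) * Complex.I :=
  gC_eq _ _

lemma differentiable_J {f : E n → E n} (hf : Differentiable ℝ f) :
    Differentiable ℝ fun z => J (f z) :=
  hf.const_smul Complex.I

lemma hasFDerivAt_ofReal_rI {A B : E n → E n} {p : E n} (hA : DifferentiableAt ℝ A p)
    (hB : DifferentiableAt ℝ B p) :
    HasFDerivAt (fun z => (rI (A z) (B z) : ℂ)) (Complex.ofRealCLM ∘L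
      fderivInnerCLM ℝ (A p, B p) ∘L (fderiv ℝ A p).prod (fderiv ℝ B p)) p := by
  simp only [rI_eq_inner]
  exact Complex.ofRealCLM.hasFDerivAt.comp p (hA.hasFDerivAt.inner ℝ hB.hasFDerivAt)

variable {U V : E n → CV n} {p : E n}

lemma differentiableAt_gC
    (hU1 : DifferentiableAt ℝ (fun z => (U z).1) p)
    (hU2 : DifferentiableAt ℝ (fun z => (U z).2) p)
    (hV1 : DifferentiableAt ℝ (fun z => (V z).1) p)
    (hV2 : DifferentiableAt ℝ (fun z => (V z).2) p) :
    DifferentiableAt ℝ (fun z => gC (U z) (V z)) p := by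
  simp only [gC_eq]
  exact ((hasFDerivAt_ofReal_rI hU1 hV1).differentiableAt.sub
    (hasFDerivAt_ofReal_rI hU2 hV2).differentiableAt).add
    (((hasFDerivAt_ofReal_rI hU1 hV2).differentiableAt.add
      (hasFDerivAt_ofReal_rI hU2 hV1).differentiableAt).mul_const Complex.I)

lemma dC_gC
    (hU1 : DifferentiableAt ℝ (fun z => (U z).1) p)
    (hU2 : DifferentiableAt ℝ (fun z => (U z).2) p)
    (hV1 : DifferentiableAt ℝ (fun z => (V z).1) p)
    (hV2 : DifferentiableAt ℝ (fun z => (V z).2) p)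
    (u : CV n) :
    dC (fun z => gC (U z) (V z)) u p = gC (DD U u p) (V p) + gC (U p) (DD V u p) := by
  have hf := (((hasFDerivAt_ofReal_rI hU1 hV1).sub (hasFDerivAt_ofReal_rI hU2 hV2)).add
    (((hasFDerivAt_ofReal_rI hU1 hV2).add (hasFDerivAt_ofReal_rI hU2 hV1)).mul_const
      Complex.I)).congr_of_eventuallyEq (Eventually.of_forall fun z => gC_eq (U z) (V z))
  rw [dC, hf.fderiv]
  simp only [smul_add, add_apply, sub_apply, ContinuousLinearMap.comp_apply,
    ContinuousLinearMap.prod_apply, fderivInnerCLM_apply, Complex.ofRealCLM_apply,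
    Complex.ofReal_add, smul_apply, smul_eq_mul, DD, gC_eq, rI_eq_inner, inner_sub_left,
    Complex.ofReal_sub, inner_add_left, inner_sub_right, inner_add_right]
  ring_nf
  rw [Complex.I_sq]
  ring

lemma DD_TF (hν : DifferentiableAt ℝ ν p) (u : CV n) :
    DD (TF ν) u p = (J (fderiv ℝ ν p u.1), J (fderiv ℝ ν p u.2)) := by
  simp [DD, TF, J, fderiv_fun_const_smul hν]

end Complexified

section LeviForm

variable {n : ℕ} {M : Set (E n)} {ν : E n → E n} {p : E n}

theorem IsHypersurface.hC_comm (hM : IsHypersurface M ν) (hp : p ∈ M) {v w : CV n}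
    (hv : v ∈ ctangAt ν p) (hw : w ∈ ctangAt ν p) : hC ν p v w = hC ν p w v := by
  rw [hC_eq_sff, hC_eq_sff, hM.sff_comm hp hv.1 hw.1, hM.sff_comm hp hv.2 hw.2,
    hM.sff_comm hp hv.1 hw.2, hM.sff_comm hp hv.2 hw.1]
  ring

theorem IsHypersurface.dC_eq_zero (hM : IsHypersurface M ν) (hp : p ∈ M)
    {f : E n → ℂ} (hf : DifferentiableAt ℝ f p) (hf0 : ∀ z ∈ M, f z = 0) {u : CV n}
    (hu : u ∈ ctangAt ν p) : dC f u p = 0 := by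
  have hf0' : ∀ᶠ z in 𝓝 p, z ∈ M → f z = 0 := Eventually.of_forall hf0
  rw [dC, hM.fderiv_apply_eq_zero hp hf hf0' hu.1, hM.fderiv_apply_eq_zero hp hf hf0' hu.2,
    mul_zero, add_zero]

theorem IsHypersurface.gC_DD_TF (hM : IsHypersurface M ν) (hp : p ∈ M)
    {U : E n → CV n} (hU1 : DifferentiableAt ℝ (fun z => (U z).1) p)
    (hU2 : DifferentiableAt ℝ (fun z => (U z).2) p) (hU0 : ∀ z ∈ M, gC (U z) (TF ν z) = 0)
    {u : CV n} (hu : u ∈ ctangAt ν p) :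
    gC (DD U u p) (TF ν p) = -gC (U p) (J (fderiv ℝ ν p u.1), J (fderiv ℝ ν p u.2)) := by
  have hν : Differentiable ℝ ν := hM.1.differentiable (by simp)
  have hT1 : DifferentiableAt ℝ (fun z => (TF ν z).1) p := differentiable_J hν p
  have hT2 : DifferentiableAt ℝ (fun z => (TF ν z).2) p := differentiableAt_const 0
  have h0 := hM.dC_eq_zero hp (differentiableAt_gC hU1 hU2 hT1 hT2) hU0 hu
  rw [dC_gC hU1 hU2 hT1 hT2, DD_TF (hν p)] at h0
  exact eq_neg_of_add_eq_zero_left h0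

end LeviForm

namespace IsHoloField

variable {n : ℕ} {M : Set (E n)} {ν : E n → E n} {Z : E n → CV n}

lemma differentiable_fst (hZ : IsHoloField M ν Z) : Differentiable ℝ fun z => (Z z).1 :=
  hZ.1.differentiable (by simp)

lemma differentiable_snd (hZ : IsHoloField M ν Z) : Differentiable ℝ fun z => (Z z).2 := by
  rw [show (fun z => (Z z).2) = fun z => -J (Z z).1 from funext hZ.2.1]
  exact (differentiable_J hZ.differentiable_fst).neg

lemma differentiable_conjF_snd (hZ : IsHoloField M ν Z) :
    Differentiable ℝ fun z => (conjF Z z).2 :=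
  hZ.differentiable_snd.neg

lemma snd_conjF (hZ : IsHoloField M ν Z) (z : E n) : (conjF Z z).2 = J (Z z).1 := by
  simp [conjF, conjCV, hZ.2.1 z]

lemma mem_ctangAt (hZ : IsHoloField M ν Z) {p : E n} (hp : p ∈ M) : Z p ∈ ctangAt ν p := by
  have h := hZ.2.2 p hp
  simp [ctangAt, tangAt, hZ.2.1 p, rI, J, inner_smul_right, h]

lemma conjF_mem_ctangAt (hZ : IsHoloField M ν Z) {p : E n} (hp : p ∈ M) :
    conjF Z p ∈ ctangAt ν p := by
  have h := hZ.2.2 p hp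
  simp [ctangAt, tangAt, conjF, conjCV, hZ.2.1 p, rI, J, h]

lemma gC_TF (hZ : IsHoloField M ν Z) {z : E n} (hz : z ∈ M) : gC (Z z) (TF ν z) = 0 := by
  have h := inner_eq_zero_symm.1 (hZ.2.2 z hz)
  simp [gC, TF, hZ.2.1 z, rI, J, inner_smul_left, h]

lemma gC_conjF_TF (hZ : IsHoloField M ν Z) {z : E n} (hz : z ∈ M) :
    gC (conjF Z z) (TF ν z) = 0 := by
  have h := inner_eq_zero_symm.1 (hZ.2.2 z hz)
  simp [gC, TF, conjF, conjCV, hZ.2.1 z, rI, J, h]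

end IsHoloField

theorem stmt4 {n : ℕ} (M : Set (E n)) (ν : E n → E n)
    (hsurf : IsHypersurface M ν)
    (Z W : E n → CV n) (hZ : IsHoloField M ν Z) (hW : IsHoloField M ν W) :
    ∀ p ∈ M, gC (bracket Z (conjF W) p) (TF ν p)
      = -(2 * Complex.I) * hC ν p (Z p) (conjCV (W p)) := by
  intro p hp
  change _ = _ * hC ν p (Z p) (conjF W p)
  have hWZ : gC (DD (conjF W) (Z p) p) (TF ν p) = -Complex.I * hC ν p (conjF W p) (Z p) := by
    rw [hsurf.gC_DD_TF hp (U := conjF W) (hW.differentiable_fst p)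
      (hW.differentiable_conjF_snd p) (fun z hz => hW.gC_conjF_TF hz) (hZ.mem_ctangAt hp),
      gC_J_right_of_snd_eq_J (hW.snd_conjF p), hC]
    ring
  have hZW : gC (DD Z (conjF W p) p) (TF ν p) = Complex.I * hC ν p (Z p) (conjF W p) := by
    rw [hsurf.gC_DD_TF hp (hZ.differentiable_fst p) (hZ.differentiable_snd p)
      (fun z hz => hZ.gC_TF hz) (hW.conjF_mem_ctangAt hp),
      gC_J_right_of_snd_eq_neg_J (hZ.2.1 p), hC]
    ring
  rw [bracket, gC_sub_left, hWZ, hZW,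
    hsurf.hC_comm hp (hW.conjF_mem_ctangAt hp) (hZ.mem_ctangAt hp)]
  ring
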